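/- Let N be a quantum channel on d×d complex matrices, γ a positive-definite density matrix with N(γ) positive definite, and ρ a density matrix. Fix orthonormal eigenbases γ = ∑_i r_i |i⟩⟨i|, N(γ) = ∑_{k'} r'_{k'} |k'⟩⟨k'|, ρ = ∑_μ p_μ |ψ_μ⟩⟨ψ_μ|, N(ρ) = ∑_ν p'_ν |φ'_ν⟩⟨φ'_ν|, and define the two-point-measurement quasi-probability P^{μ,ν}_{ij,k'l'} = p_μ ⟨φ'_ν| Π_{k'} N(Π_i |ψ_μ⟩⟨ψ_μ| Π_j) Π_{l'} |φ'_ν⟩ with Π_i = |i⟩⟨i|, Π_{k'} = |k'⟩⟨k'|. Then all four marginality relations hold: (1) ∑_{ν,i,j,k',l'} P^{μ,ν}_{ij,k'l'} = p_μ for each μ; (2) ∑_{μ,i,j,k',l'} P^{μ,ν}_{ij,k'l'} = p'_ν for each ν; (3) ∑_{μ,ν,j,k',l'} P^{μ,ν}_{ij,k'l'} = ⟨i|ρ|i⟩ for each i; (4) ∑_{μ,ν,i,j,l'} P^{μ,ν}_{ij,k'l'} = ⟨k'|N(ρ)|k'⟩ for each k'. -/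

import Mathlib

open Matrix
open scoped ComplexOrder

/-- ⟨v|A|w⟩ -/
noncomputable def braket {d : ℕ} (v : Fin d → ℂ) (A : Matrix (Fin d) (Fin d) ℂ)
    (w : Fin d → ℂ) : ℂ :=
  dotProduct (star v) (A.mulVec w)

/-- |v⟩⟨w| -/
noncomputable def ketbra {d : ℕ} (v w : Fin d → ℂ) : Matrix (Fin d) (Fin d) ℂ :=
  Matrix.vecMulVec v (star w)

/-- A quantum channel in Kraus form: N(X) = ∑ m, K m * X * (K m)ᴴ. -/
noncomputable def krausMap {d : ℕ} {ι : Type} [Fintype ι] (K : ι → Matrix (Fin d) (Fin d) ℂ)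
    (X : Matrix (Fin d) (Fin d) ℂ) : Matrix (Fin d) (Fin d) ℂ :=
  ∑ m, K m * X * (K m)ᴴ

/-- The adjoint map: N†(X) = ∑ m, (K m)ᴴ * X * K m. -/
noncomputable def krausAdj {d : ℕ} {ι : Type} [Fintype ι] (K : ι → Matrix (Fin d) (Fin d) ℂ)
    (X : Matrix (Fin d) (Fin d) ℂ) : Matrix (Fin d) (Fin d) ℂ :=
  ∑ m, (K m)ᴴ * X * K m

/-- An orthonormal family of vectors in ℂ^d. -/
def IsONB {d : ℕ} (e : Fin d → Fin d → ℂ) : Prop :=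
  ∀ i j, dotProduct (star (e i)) (e j) = if i = j then 1 else 0

/-- For A = ∑ i, r i • |e i⟩⟨e i| with `e` orthonormal and `r` positive, the complex
matrix power A^z = exp (z log A) is given by A^z = ∑ i, (r i)^z • |e i⟩⟨e i|. -/
noncomputable def projPow {d : ℕ} (r : Fin d → ℝ) (e : Fin d → Fin d → ℂ) (z : ℂ) :
    Matrix (Fin d) (Fin d) ℂ :=
  ∑ i, ((r i : ℂ) ^ z) • ketbra (e i) (e i)

/-- The two-point-measurement quasi-probability
P^{μ,ν}_{ij,k'l'} = p_μ ⟨φ'_ν| Π_{k'} N(Π_i |ψ_μ⟩⟨ψ_μ| Π_j) Π_{l'} |φ'_ν⟩. -/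
noncomputable def tpmP {d : ℕ} {ι : Type} [Fintype ι] (K : ι → Matrix (Fin d) (Fin d) ℂ)
    (p : Fin d → ℝ) (ψ : Fin d → Fin d → ℂ) (φ : Fin d → Fin d → ℂ)
    (e : Fin d → Fin d → ℂ) (f : Fin d → Fin d → ℂ)
    (μ ν i j k l : Fin d) : ℂ :=
  (p μ : ℂ) *
    braket (φ ν)
      (ketbra (f k) (f k) *
        krausMap K (ketbra (e i) (e i) * ketbra (ψ μ) (ψ μ) * ketbra (e j) (e j)) *
        ketbra (f l) (f l))
      (φ ν)

/-!
The quasi-probability is linear in the input state: `P^{μ,ν}` is the quasi-probability of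
`p_μ |ψ_μ⟩⟨ψ_μ|`. Summing over `i`, `j`, `k'` or `l'` removes the corresponding projector by the
completeness relation `∑ Π = 1`, and summing over `ν` turns `⟨φ'_ν| · |φ'_ν⟩` into a trace, which
`N` preserves. Each marginal is then read off from `ρ = ∑ p_μ |ψ_μ⟩⟨ψ_μ|` and the spectral
decomposition of `N(ρ)`.
-/

section Braket
variable {d : ℕ}

lemma braket_sum {α : Type*} (s : Finset α) (v w : Fin d → ℂ)
    (A : α → Matrix (Fin d) (Fin d) ℂ) :
    braket v (∑ x ∈ s, A x) w = ∑ x ∈ s, braket v (A x) w := by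
  simp only [braket, sum_mulVec, dotProduct_sum]

lemma braket_smul (c : ℂ) (v w : Fin d → ℂ) (A : Matrix (Fin d) (Fin d) ℂ) :
    braket v (c • A) w = c * braket v A w := by
  simp only [braket, smul_mulVec, dotProduct_smul, smul_eq_mul]

lemma braket_ketbra (v a b w : Fin d → ℂ) :
    braket v (ketbra a b) w = (star v ⬝ᵥ a) * (star b ⬝ᵥ w) := by
  simp [braket, ketbra, vecMulVec_mulVec, dotProduct_smul, mul_comm]

lemma trace_ketbra (v w : Fin d → ℂ) : (ketbra v w).trace = star w ⬝ᵥ v := by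
  rw [ketbra, trace_vecMulVec, dotProduct_comm]

lemma trace_ketbra_mul (v w : Fin d → ℂ) (A : Matrix (Fin d) (Fin d) ℂ) :
    (ketbra v w * A).trace = braket w A v := by
  rw [ketbra, vecMulVec_mul, trace_vecMulVec, dotProduct_comm, braket, dotProduct_mulVec]

end Braket

namespace IsONB
variable {d : ℕ} {g : Fin d → Fin d → ℂ}

theorem sum_ketbra_self (hg : IsONB g) : ∑ x, ketbra (g x) (g x) = 1 := by
  -- the matrix `U` with columns `g x` satisfies `Uᴴ * U = 1`, hence also `U * Uᴴ = 1`
  let U : Matrix (Fin d) (Fin d) ℂ := Matrix.of fun a x => g x a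
  have hU : Uᴴ * U = 1 := by
    ext x y
    simpa [U, mul_apply, conjTranspose_apply, dotProduct, one_apply] using hg x y
  have hUU : U * Uᴴ = 1 := mul_eq_one_comm.mp hU
  ext a b
  simpa [U, mul_apply, conjTranspose_apply, ketbra, vecMulVec_apply, Matrix.sum_apply, mul_comm]
    using congrFun (congrFun hUU a) b

theorem sum_ketbra_self_mul (hg : IsONB g) (A : Matrix (Fin d) (Fin d) ℂ) :
    ∑ x, ketbra (g x) (g x) * A = A := by
  rw [← Finset.sum_mul, hg.sum_ketbra_self, one_mul]

theorem sum_mul_ketbra_self (hg : IsONB g) (A : Matrix (Fin d) (Fin d) ℂ) :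
    ∑ x, A * ketbra (g x) (g x) = A := by
  rw [← Finset.mul_sum, hg.sum_ketbra_self, mul_one]

theorem trace_ketbra_self (hg : IsONB g) (x : Fin d) : (ketbra (g x) (g x)).trace = 1 := by
  rw [trace_ketbra, hg x x, if_pos rfl]

theorem sum_braket_self (hg : IsONB g) (A : Matrix (Fin d) (Fin d) ℂ) :
    ∑ x, braket (g x) A (g x) = A.trace := by
  simp only [← trace_ketbra_mul, ← trace_sum, hg.sum_ketbra_self_mul]

theorem braket_sum_smul_ketbra_self (hg : IsONB g) (c : Fin d → ℂ) (x : Fin d) :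
    braket (g x) (∑ y, c y • ketbra (g y) (g y)) (g x) = c x := by
  simp [braket_sum, braket_smul, braket_ketbra, hg x, hg _ x]

end IsONB

section Kraus
variable {d : ℕ} {ι : Type} [Fintype ι] (K : ι → Matrix (Fin d) (Fin d) ℂ)

lemma krausMap_sum {α : Type*} (s : Finset α) (X : α → Matrix (Fin d) (Fin d) ℂ) :
    krausMap K (∑ x ∈ s, X x) = ∑ x ∈ s, krausMap K (X x) := by
  simp only [krausMap, Finset.mul_sum, Finset.sum_mul]
  exact Finset.sum_comm

lemma krausMap_smul (c : ℂ) (X : Matrix (Fin d) (Fin d) ℂ) :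
    krausMap K (c • X) = c • krausMap K X := by
  simp only [krausMap, Finset.smul_sum, Matrix.mul_smul, Matrix.smul_mul]

lemma trace_krausMap (hK : ∑ m, (K m)ᴴ * K m = 1) (X : Matrix (Fin d) (Fin d) ℂ) :
    (krausMap K X).trace = X.trace := by
  calc (krausMap K X).trace = ∑ m, ((K m)ᴴ * K m * X).trace := by
        rw [krausMap, trace_sum]
        exact Finset.sum_congr rfl fun m _ => trace_mul_cycle _ _ _
    _ = X.trace := by rw [← trace_sum, ← Finset.sum_mul, hK, one_mul]

end Kraus

/-- `tpmP` with `p μ |ψ_μ⟩⟨ψ_μ|` replaced by an arbitrary matrix `X`. -/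
noncomputable def tpmTerm {d : ℕ} {ι : Type} [Fintype ι] (K : ι → Matrix (Fin d) (Fin d) ℂ)
    (φ e f : Fin d → Fin d → ℂ) (X : Matrix (Fin d) (Fin d) ℂ) (ν i j k l : Fin d) : ℂ :=
  braket (φ ν)
    (ketbra (f k) (f k) * krausMap K (ketbra (e i) (e i) * X * ketbra (e j) (e j)) *
      ketbra (f l) (f l))
    (φ ν)

lemma tpmP_eq_tpmTerm {d : ℕ} {ι : Type} [Fintype ι] (K : ι → Matrix (Fin d) (Fin d) ℂ)
    (p : Fin d → ℝ) (ψ φ e f : Fin d → Fin d → ℂ) (μ ν i j k l : Fin d) :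
    tpmP K p ψ φ e f μ ν i j k l =
      tpmTerm K φ e f ((p μ : ℂ) • ketbra (ψ μ) (ψ μ)) ν i j k l := by
  simp only [tpmP, tpmTerm, Matrix.mul_smul, Matrix.smul_mul, krausMap_smul, braket_smul]

namespace tpmTerm
variable {d : ℕ} {ι : Type} [Fintype ι] {K : ι → Matrix (Fin d) (Fin d) ℂ}
  {φ e f : Fin d → Fin d → ℂ} {X : Matrix (Fin d) (Fin d) ℂ}

lemma sum_jkl (he : IsONB e) (hf : IsONB f) (ν i : Fin d) :
    ∑ j, ∑ k, ∑ l, tpmTerm K φ e f X ν i j k l =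
      braket (φ ν) (krausMap K (ketbra (e i) (e i) * X)) (φ ν) := by
  simp only [tpmTerm, ← braket_sum, hf.sum_mul_ketbra_self, hf.sum_ketbra_self_mul,
    ← krausMap_sum, he.sum_mul_ketbra_self]

lemma sum_ijkl (he : IsONB e) (hf : IsONB f) (ν : Fin d) :
    ∑ i, ∑ j, ∑ k, ∑ l, tpmTerm K φ e f X ν i j k l =
      braket (φ ν) (krausMap K X) (φ ν) := by
  simp only [sum_jkl he hf, ← braket_sum, ← krausMap_sum, he.sum_ketbra_self_mul]

lemma sum_ijl (he : IsONB e) (hf : IsONB f) (ν k : Fin d) :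
    ∑ i, ∑ j, ∑ l, tpmTerm K φ e f X ν i j k l =
      braket (φ ν) (ketbra (f k) (f k) * krausMap K X) (φ ν) := by
  simp only [tpmTerm, ← braket_sum, hf.sum_mul_ketbra_self, ← Finset.mul_sum,
    ← krausMap_sum, he.sum_mul_ketbra_self, he.sum_ketbra_self_mul]

end tpmTerm

theorem tpm_quasiprobability_marginals_general
    {d : ℕ} {ι : Type} [Fintype ι] (K : ι → Matrix (Fin d) (Fin d) ℂ)
    (hK : ∑ m, (K m)ᴴ * K m = 1)
    (e : Fin d → Fin d → ℂ) (he : IsONB e)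
    (f : Fin d → Fin d → ℂ) (hf : IsONB f)
    (ρ : Matrix (Fin d) (Fin d) ℂ)
    (p : Fin d → ℝ) (ψ : Fin d → Fin d → ℂ) (hψ : IsONB ψ)
    (hρ : ρ = ∑ μ, ((p μ : ℂ)) • ketbra (ψ μ) (ψ μ))
    (p' : Fin d → ℝ) (φ : Fin d → Fin d → ℂ) (hφ : IsONB φ)
    (hNρ : krausMap K ρ = ∑ ν, ((p' ν : ℂ)) • ketbra (φ ν) (φ ν)) :
    (∀ μ, ∑ ν, ∑ i, ∑ j, ∑ k, ∑ l, tpmP K p ψ φ e f μ ν i j k l = (p μ : ℂ)) ∧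
    (∀ ν, ∑ μ, ∑ i, ∑ j, ∑ k, ∑ l, tpmP K p ψ φ e f μ ν i j k l = (p' ν : ℂ)) ∧
    (∀ i, ∑ μ, ∑ ν, ∑ j, ∑ k, ∑ l, tpmP K p ψ φ e f μ ν i j k l = braket (e i) ρ (e i)) ∧
    (∀ k, ∑ μ, ∑ ν, ∑ i, ∑ j, ∑ l, tpmP K p ψ φ e f μ ν i j k l =
      braket (f k) (krausMap K ρ) (f k)) := by
  simp only [tpmP_eq_tpmTerm]
  refine ⟨fun μ => ?_, fun ν => ?_, fun i => ?_, fun k => ?_⟩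
  · simp only [tpmTerm.sum_ijkl he hf, hφ.sum_braket_self, trace_krausMap K hK, trace_smul,
      hψ.trace_ketbra_self, smul_eq_mul, mul_one]
  · simp only [tpmTerm.sum_ijkl he hf]
    rw [← braket_sum, ← krausMap_sum, ← hρ, hNρ, hφ.braket_sum_smul_ketbra_self]
  · simp only [tpmTerm.sum_jkl he hf, hφ.sum_braket_self, trace_krausMap K hK, trace_ketbra_mul]
    rw [← braket_sum, ← hρ]
  · simp only [tpmTerm.sum_ijl he hf, hφ.sum_braket_self, trace_ketbra_mul]
    rw [← braket_sum, ← krausMap_sum, ← hρ]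

/-- the four marginality relations of the TPM quasi-probability. -/
theorem tpm_quasiprobability_marginals
    {d : ℕ} {ι : Type} [Fintype ι] (K : ι → Matrix (Fin d) (Fin d) ℂ)
    (hK : ∑ m, (K m)ᴴ * K m = 1)
    (r : Fin d → ℝ) (e : Fin d → Fin d → ℂ) (hr : ∀ i, 0 < r i) (he : IsONB e)
    (hrtr : ∑ i, r i = 1)
    (r' : Fin d → ℝ) (f : Fin d → Fin d → ℂ) (hr' : ∀ k, 0 < r' k) (hf : IsONB f)
    (hNγ : krausMap K (∑ i, ((r i : ℂ)) • ketbra (e i) (e i)) =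
      ∑ k, ((r' k : ℂ)) • ketbra (f k) (f k))
    (ρ : Matrix (Fin d) (Fin d) ℂ)
    (p : Fin d → ℝ) (ψ : Fin d → Fin d → ℂ) (hp : ∀ μ, 0 ≤ p μ) (hψ : IsONB ψ)
    (hρ : ρ = ∑ μ, ((p μ : ℂ)) • ketbra (ψ μ) (ψ μ))
    (p' : Fin d → ℝ) (φ : Fin d → Fin d → ℂ) (hp' : ∀ ν, 0 ≤ p' ν) (hφ : IsONB φ)
    (hNρ : krausMap K ρ = ∑ ν, ((p' ν : ℂ)) • ketbra (φ ν) (φ ν)) :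
    (∀ μ, ∑ ν, ∑ i, ∑ j, ∑ k, ∑ l, tpmP K p ψ φ e f μ ν i j k l = (p μ : ℂ)) ∧
    (∀ ν, ∑ μ, ∑ i, ∑ j, ∑ k, ∑ l, tpmP K p ψ φ e f μ ν i j k l = (p' ν : ℂ)) ∧
    (∀ i, ∑ μ, ∑ ν, ∑ j, ∑ k, ∑ l, tpmP K p ψ φ e f μ ν i j k l = braket (e i) ρ (e i)) ∧
    (∀ k, ∑ μ, ∑ ν, ∑ i, ∑ j, ∑ l, tpmP K p ψ φ e f μ ν i j k l =
      braket (f k) (krausMap K ρ) (f k)) :=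
  tpm_quasiprobability_marginals_general K hK e he f hf ρ p ψ hψ hρ p' φ hφ hNρ
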